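/- arXiv:2006.04961 — 4 statements merged into one kernel-verified Lean document; each statement's English description precedes it below -/
import Mathlib

section
/- Let q be a prime power and let γ, δ1 ∈ F_{q^5} with γ ∉ F_q. If 1, γ, γδ1 are linearly independent over F_q, then for all b1, b2, b3, b4 ∈ F_q it is impossible that γ^2 δ1 = b1 + b2 γ + b3 γ^2 + b4 γ δ1 together with b1 + b2 b4 + b3 b4^2 = 0. (Equivalently: (γ - b4)(γδ1 - b2 - b3(γ + b4)) ≠ 0 under these hypotheses.) -/
/-! The relation on `γ²δ₁` together with `b₁ + b₂b₄ + b₃b₄² = 0` says exactly that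
`(γ - b₄)(γδ₁ - b₂ - b₃(γ + b₄)) = 0`. As `γ ∉ F`, the second factor vanishes, which is an
`F`-linear dependence among `1, γ, γδ₁`. -/

theorem mul_eq_add_mul_of_sq_mul_eq {R : Type*} [CommRing R] [IsDomain R] {x y b1 b2 b3 b4 : R}
    (hx : x ≠ b4) (h : x ^ 2 * y = b1 + b2 * x + b3 * x ^ 2 + b4 * (x * y))
    (hb : b1 + b2 * b4 + b3 * b4 ^ 2 = 0) :
    x * y = b2 + b3 * b4 + b3 * x := by
  have hfac : (x - b4) * (x * y - (b2 + b3 * b4 + b3 * x)) = 0 := by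
    linear_combination h + hb
  exact sub_eq_zero.mp ((mul_eq_zero.mp hfac).resolve_left (sub_ne_zero.mpr hx))

theorem LinearIndependent.ne_algebraMap_add_algebraMap_mul {F K : Type*} [CommRing F]
    [Nontrivial F] [Ring K] [Algebra F K] {x y : K} (h : LinearIndependent F ![1, x, y]) (c d : F) :
    y ≠ algebraMap F K c + algebraMap F K d * x := by
  intro hy
  have hsum : ∑ i, ![c, d, -1] i • ![1, x, y] i = 0 := by
    simp only [Fin.sum_univ_three, Matrix.cons_val, Algebra.smul_def, hy, map_neg, map_one]
    noncomm_ring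
  simpa using Fintype.linearIndependent_iff.mp h _ hsum 2

theorem stmt_4_general (F K : Type*) [Field F] [Field K] [Algebra F K]
    (γ δ1 : K) (hγ : γ ∉ Set.range (algebraMap F K))
    (hind : LinearIndependent F ![(1 : K), γ, γ * δ1]) (b1 b2 b3 b4 : F) :
    ¬ (γ ^ 2 * δ1 = algebraMap F K b1 + algebraMap F K b2 * γ + algebraMap F K b3 * γ ^ 2 +
        algebraMap F K b4 * (γ * δ1) ∧
      b1 + b2 * b4 + b3 * b4 ^ 2 = 0) := by
  rintro ⟨hrel, hb⟩
  have hb' : algebraMap F K b1 + algebraMap F K b2 * algebraMap F K b4 +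
      algebraMap F K b3 * algebraMap F K b4 ^ 2 = 0 := by
    simpa using congrArg (algebraMap F K) hb
  have hlin := mul_eq_add_mul_of_sq_mul_eq (fun h => hγ ⟨b4, h.symm⟩) hrel hb'
  exact hind.ne_algebraMap_add_algebraMap_mul (b2 + b3 * b4) b3 (by rw [hlin, map_add, map_mul])

/-- If `1, γ, γδ₁` are `F_q`-linearly independent (with `γ ∉ F_q`), then for
all `b₁, b₂, b₃, b₄ ∈ F_q` it is impossible that simultaneously
`γ²δ₁ = b₁ + b₂γ + b₃γ² + b₄γδ₁` and `b₁ + b₂b₄ + b₃b₄² = 0`. -/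
theorem stmt_4 {q : ℕ} (hq : IsPrimePow q) (F K : Type*) [Field F] [Fintype F]
    [Field K] [Algebra F K] (hF : Fintype.card F = q) (hK : Module.finrank F K = 5)
    (γ δ1 : K) (hγ : γ ∉ Set.range (algebraMap F K))
    (hind : LinearIndependent F ![(1 : K), γ, γ * δ1]) (b1 b2 b3 b4 : F) :
    ¬ (γ ^ 2 * δ1 = algebraMap F K b1 + algebraMap F K b2 * γ + algebraMap F K b3 * γ ^ 2 +
        algebraMap F K b4 * (γ * δ1) ∧
      b1 + b2 * b4 + b3 * b4 ^ 2 = 0) :=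
  stmt_4_general F K γ δ1 hγ hind b1 b2 b3 b4
end

section
/- Let q be a prime power. A line of PG(4, q^5) disjoint from a canonical subgeometry Σ ≅ PG(4,q) meets the set Ω2 of rank-2 points (points lying on the extension of some line of Σ but not in Σ) in exactly 0, 1, 2, q+1 or q^2+q+1 points. -/
/-- The canonical subgeometry `Σ ≅ PG(4,q)` of `PG(4,q⁵)`: points admitting homogeneous
coordinates in `F_q⁵`. -/
def sigmaSet (F K : Type*) [Field F] [Field K] [Algebra F K] :
    Set (Projectivization K (Fin 5 → K)) :=
  {P | ∃ (w : Fin 5 → F) (c : K), P.rep = c • (fun i => algebraMap F K (w i))}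

/-- The set `Ω₂` of rank-2 points: points not in `Σ` lying on the extension of a line
of `Σ` (the line of `PG(4,q⁵)` spanned by two distinct points of `Σ`). -/
def omega2Set (F K : Type*) [Field F] [Field K] [Algebra F K] :
    Set (Projectivization K (Fin 5 → K)) :=
  {P | P ∉ sigmaSet F K ∧ ∃ Q1 Q2 : Projectivization K (Fin 5 → K),
    Q1 ∈ sigmaSet F K ∧ Q2 ∈ sigmaSet F K ∧ Q1 ≠ Q2 ∧
    P.rep ∈ Submodule.span K ({Q1.rep, Q2.rep} : Set (Fin 5 → K))}

/-!
Call the *rank* of a vector `z ∈ K⁵` the dimension of the `F`-span of its coordinates; `Σ`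
consists of the points of rank `1` and `Ω₂` of the points of rank `2`. If the line contains two
rank-2 points `⟨z₁⟩, ⟨z₂⟩`, its other points are `⟨z₁ + t z₂⟩`, and we count the `t` for which
`z₁ + t z₂` has rank `2`. Write `zᵢ = αᵢ uᵢ + βᵢ vᵢ` with `uᵢ, vᵢ ∈ F⁵`.

If `u₁, v₁, u₂, v₂` are independent (the two lines of `Σ` are skew), the rank of `z₁ + t z₂` is
that of `α₁, β₁, t α₂, t β₂`, so `t` counts iff `t · ⟨α₂, β₂⟩ ⊆ ⟨α₁, β₁⟩`. Two nonzero such `t`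
differ by a factor stabilising a `2`-dimensional `F`-subspace of `K`; its degree over `F` is at
most `2` and divides `[K : F] = 5`, so it lies in `F`: there are `1` or `q` values of `t`.

Otherwise both vectors live over a `3`-dimensional subspace of `F⁵` (the lines meet), and the rank
of `z₁ + t z₂` is `3 - dim ker (p + t m)` for two maps `p, m : F³ → K`. As no point of the line has
rank `≤ 1`, these kernels are at most lines and `ker p ∩ ker m = 0`; every `σ` with `m σ ≠ 0`
lies in the kernel for exactly one `t`, whence `(q - 1) · #t = q³ - q`, i.e. `q² + q` values.
-/

open Module Submodule
open scoped LinearAlgebra.Projectivization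

section CoordRank

variable {F K : Type*} [Field F] [Field K] [Algebra F K] {ι κ κ₁ κ₂ : Type*} [Fintype κ]

variable (F) in
noncomputable def coordRank (z : ι → K) : ℕ := finrank F (span F (Set.range z))

variable (K) in
def liftComb (e : κ → ι → F) : (κ → K) →ₗ[K] ι → K :=
  Fintype.linearCombination K fun j => algebraMap F K ∘ e j

lemma liftComb_apply (e : κ → ι → F) (c : κ → K) (i : ι) :
    liftComb K e c i = ∑ j, c j * algebraMap F K (e j i) := by
  simp [liftComb, Fintype.linearCombination_apply, Finset.sum_apply]

lemma liftComb_fin_two (e : Fin 2 → ι → F) (c : Fin 2 → K) :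
    liftComb K e c = c 0 • (algebraMap F K ∘ e 0) + c 1 • (algebraMap F K ∘ e 1) := by
  simp [liftComb, Fintype.linearCombination_apply, Fin.sum_univ_two]

lemma liftComb_sumElim [Fintype κ₁] [Fintype κ₂] (e₁ : κ₁ → ι → F) (e₂ : κ₂ → ι → F)
    (c₁ : κ₁ → K) (c₂ : κ₂ → K) :
    liftComb K (Sum.elim e₁ e₂) (Sum.elim c₁ c₂) = liftComb K e₁ c₁ + liftComb K e₂ c₂ := by
  simp [liftComb, Fintype.linearCombination_apply, Fintype.sum_sum_type]

lemma exists_liftComb_eq_liftComb_of_mem_span [Fintype κ₁] {e : κ → ι → F} {f : κ₁ → ι → F}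
    (he : ∀ j, e j ∈ span F (Set.range f)) (c : κ → K) :
    ∃ c' : κ₁ → K, liftComb K e c = liftComb K f c' := by
  choose l hl using fun j => (mem_span_range_iff_exists_fun F).mp (he j)
  refine ⟨fun k => ∑ j, c j * algebraMap F K (l j k), funext fun i => ?_⟩
  simp only [liftComb_apply, ← hl, Finset.sum_apply, Pi.smul_apply, smul_eq_mul, map_sum,
    map_mul, Finset.mul_sum, Finset.sum_mul]
  rw [Finset.sum_comm]
  exact Finset.sum_congr rfl fun j _ => Finset.sum_congr rfl fun k _ => by ring

lemma linearCombination_smul_add_smul (a b : K) (c₁ c₂ : κ → K) :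
    Fintype.linearCombination F (a • c₁ + b • c₂) =
      a • Fintype.linearCombination F c₁ + b • Fintype.linearCombination F c₂ := by
  simp only [← Fintype.bilinearCombination_apply (R := F) (S := K), map_add, map_smul]

lemma coordRank_smul {c : K} (hc : c ≠ 0) (z : ι → K) : coordRank F (c • z) = coordRank F z := by
  have hrange : Set.range (c • z) = LinearMap.mulLeft F c '' Set.range z := by
    rw [← Set.range_comp]; rfl
  rw [coordRank, hrange, span_image]
  exact (equivMapOfInjective _ (mul_right_injective₀ hc) _).finrank_eq.symm

variable [Fintype ι]

lemma coordRank_eq_finrank_range (z : ι → K) :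
    coordRank F z = finrank F (LinearMap.range (Fintype.linearCombination F z)) := by
  rw [coordRank, Fintype.range_linearCombination]

lemma linearCombination_liftComb (e : κ → ι → F) (c : κ → K) :
    Fintype.linearCombination F (liftComb K e c) =
      Fintype.linearCombination F c ∘ₗ (Matrix.of e).mulVecLin := by
  ext x
  simp only [LinearMap.comp_apply, Fintype.linearCombination_apply, liftComb_apply,
    Matrix.mulVecLin_apply, Matrix.mulVec, dotProduct, Matrix.of_apply, Finset.smul_sum,
    Finset.sum_smul]
  rw [Finset.sum_comm]
  refine Finset.sum_congr rfl fun j _ => Finset.sum_congr rfl fun i _ => ?_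
  simp only [Algebra.smul_def, map_mul]
  ring

lemma coordRank_liftComb_le_left (e : κ → ι → F) (c : κ → K) :
    coordRank F (liftComb K e c) ≤ finrank F (span F (Set.range c)) := by
  rw [coordRank_eq_finrank_range, linearCombination_liftComb, ← Fintype.range_linearCombination]
  exact Submodule.finrank_mono (LinearMap.range_comp_le_range _ _)

lemma coordRank_liftComb_le_right (e : κ → ι → F) (c : κ → K) :
    coordRank F (liftComb K e c) ≤ finrank F (span F (Set.range e)) := by
  rw [coordRank_eq_finrank_range, linearCombination_liftComb, LinearMap.range_comp]
  exact (Submodule.finrank_map_le _ _).trans_eq (Matrix.rank_eq_finrank_span_row _)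

lemma coordRank_liftComb {e : κ → ι → F} (he : LinearIndependent F e) (c : κ → K) :
    coordRank F (liftComb K e c) = finrank F (span F (Set.range c)) := by
  have hsurj : LinearMap.range (Matrix.of e).mulVecLin = ⊤ := by
    apply Submodule.eq_top_of_finrank_eq
    rw [← Matrix.rank, LinearIndependent.rank_matrix (M := Matrix.of e) he,
      finrank_fintype_fun_eq_card]
  rw [coordRank_eq_finrank_range, linearCombination_liftComb,
    LinearMap.range_comp_of_range_eq_top _ hsurj, Fintype.range_linearCombination]

lemma coordRank_le_card_of_eq_liftComb {z : ι → K} {e : κ → ι → F} {c : κ → K}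
    (hz : z = liftComb K e c) : coordRank F z ≤ Fintype.card κ :=
  hz ▸ (coordRank_liftComb_le_left e c).trans (finrank_range_le_card c)

lemma linearIndependent_of_coordRank_liftComb_eq_card {e : κ → ι → F} {c : κ → K}
    (h : coordRank F (liftComb K e c) = Fintype.card κ) : LinearIndependent F e :=
  linearIndependent_iff_card_eq_finrank_span.mpr
    (le_antisymm (h ▸ coordRank_liftComb_le_right e c) (finrank_range_le_card e))

lemma exists_eq_liftComb_of_coordRank_eq {z : ι → K} {d : ℕ} (hd : coordRank F z = d) :
    ∃ (c : Fin d → K) (e : Fin d → ι → F), z = liftComb K e c := by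
  subst hd
  have := FiniteDimensional.span_of_finite F (Set.finite_range z)
  let b := Module.finBasis F (span F (Set.range z))
  refine ⟨fun k => b k, fun k i => b.repr ⟨z i, subset_span ⟨i, rfl⟩⟩ k, funext fun i => ?_⟩
  have hsum := congrArg Subtype.val (b.sum_repr ⟨z i, subset_span ⟨i, rfl⟩⟩)
  simp only [Submodule.coe_sum, Submodule.coe_smul, Algebra.smul_def] at hsum
  rw [liftComb_apply]
  exact hsum.symm.trans (Finset.sum_congr rfl fun k _ => mul_comm _ _)

lemma coordRank_le_one_iff {z : ι → K} :
    coordRank F z ≤ 1 ↔ ∃ (w : ι → F) (c : K), z = c • fun i => algebraMap F K (w i) := by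
  constructor
  · intro h
    interval_cases hd : coordRank F z
    · obtain ⟨c, e, rfl⟩ := exists_eq_liftComb_of_coordRank_eq hd
      exact ⟨0, 0, by rw [Subsingleton.elim c 0, map_zero, zero_smul]⟩
    · obtain ⟨c, e, rfl⟩ := exists_eq_liftComb_of_coordRank_eq hd
      exact ⟨e 0, c 0, by simp [liftComb, Fintype.linearCombination_apply]; rfl⟩
  · rintro ⟨w, c, rfl⟩
    exact coordRank_le_card_of_eq_liftComb (κ := Fin 1) (e := fun _ => w) (c := fun _ => c)
      (by simp [liftComb, Fintype.linearCombination_apply]; rfl)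

lemma coordRank_liftComb_add_smul_le_iff [Fintype κ₁] [Fintype κ₂] {e₁ : κ₁ → ι → F}
    {e₂ : κ₂ → ι → F} (he : LinearIndependent F (Sum.elim e₁ e₂)) (c₁ : κ₁ → K) (c₂ : κ₂ → K)
    (t : K) :
    coordRank F (liftComb K e₁ c₁ + t • liftComb K e₂ c₂) ≤ finrank F (span F (Set.range c₁)) ↔
      (span F (Set.range c₂)).map (LinearMap.mulLeft F t) ≤ span F (Set.range c₁) := by
  have hrange : Set.range (t • c₂) = LinearMap.mulLeft F t '' Set.range c₂ := by
    rw [← Set.range_comp]; rfl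
  rw [← map_smul, ← liftComb_sumElim, coordRank_liftComb he, Set.Sum.elim_range, span_union,
    hrange, span_image]
  have := FiniteDimensional.span_of_finite F (Set.finite_range c₁)
  have := FiniteDimensional.span_of_finite F (Set.finite_range c₂)
  constructor
  · intro h
    exact eq_of_le_of_finrank_le le_sup_left h ▸ le_sup_right
  · intro h
    rw [sup_eq_left.mpr h]

end CoordRank

section ProjectiveLine

variable {K V : Type*} [Field K] [AddCommGroup V] [Module K V]

lemma exists_rep_eq_smul {v : V} (hv : v ≠ 0) :
    ∃ a : K, a ≠ 0 ∧ (Projectivization.mk K v hv).rep = a • v := by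
  obtain ⟨a, ha⟩ := Projectivization.exists_smul_eq_mk_rep K v hv
  exact ⟨a, a.ne_zero, ha.symm⟩

lemma add_smul_ne_zero {z₁ z₂ : V} (hz : LinearIndependent K ![z₁, z₂]) (t : K) :
    z₁ + t • z₂ ≠ 0 := fun h =>
  one_ne_zero (hz.eq_zero_of_pair (s := 1) (t := t) (by rwa [one_smul])).1

lemma eq_mk_of_rep_eq_smul {P : ℙ K V} {a : K} {v : V} (hv : v ≠ 0) (h : P.rep = a • v) :
    P = Projectivization.mk K v hv := by
  rw [← Projectivization.mk_rep P, Projectivization.mk_eq_mk_iff']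
  exact ⟨a, h.symm⟩

lemma setOf_rep_mem_span_pair_eq {z₁ z₂ : V} (hz : LinearIndependent K ![z₁, z₂])
    {p : V → Prop} (hp : ∀ (c : K) (v : V), c ≠ 0 → (p (c • v) ↔ p v)) (h₂ : p z₂) :
    {P : ℙ K V | P.rep ∈ span K {z₁, z₂} ∧ p P.rep} =
      insert (Projectivization.mk K z₂ (by simpa using hz.ne_zero 1))
        ((fun t => Projectivization.mk K _ (add_smul_ne_zero hz t)) '' {t | p (z₁ + t • z₂)}) := by
  ext P
  simp only [Set.mem_ofPred_eq, Set.mem_insert_iff, Set.mem_image]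
  constructor
  · rintro ⟨hP, hpP⟩
    obtain ⟨a, b, hab⟩ := mem_span_pair.mp hP
    by_cases ha : a = 0
    · rw [ha, zero_smul, zero_add] at hab
      exact Or.inl (eq_mk_of_rep_eq_smul _ hab.symm)
    · have hPa : P.rep = a • (z₁ + (b / a) • z₂) := by
        rw [smul_add, smul_smul, mul_div_cancel₀ b ha, hab]
      refine Or.inr ⟨b / a, ?_, (eq_mk_of_rep_eq_smul _ hPa).symm⟩
      rwa [hPa, hp a _ ha] at hpP
  · have hmem : ∀ t : K, z₁ + t • z₂ ∈ span K {z₁, z₂} := fun t =>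
      add_mem (subset_span (by simp)) (smul_mem _ _ (subset_span (by simp)))
    rintro (rfl | ⟨t, ht, rfl⟩)
    · obtain ⟨a, ha, hrep⟩ := exists_rep_eq_smul (K := K) (by simpa using hz.ne_zero 1)
      rw [hrep, hp a _ ha]
      exact ⟨smul_mem _ _ (subset_span (by simp)), h₂⟩
    · obtain ⟨a, ha, hrep⟩ := exists_rep_eq_smul (K := K) (add_smul_ne_zero hz t)
      rw [hrep, hp a _ ha]
      exact ⟨smul_mem _ _ (hmem t), ht⟩

lemma ncard_setOf_rep_mem_span_pair [Finite K] {z₁ z₂ : V} (hz : LinearIndependent K ![z₁, z₂])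
    {p : V → Prop} (hp : ∀ (c : K) (v : V), c ≠ 0 → (p (c • v) ↔ p v)) (h₂ : p z₂) :
    {P : ℙ K V | P.rep ∈ span K {z₁, z₂} ∧ p P.rep}.ncard =
      {t : K | p (z₁ + t • z₂)}.ncard + 1 := by
  rw [setOf_rep_mem_span_pair_eq hz hp h₂, Set.ncard_insert_of_notMem _ ((Set.toFinite _).image _),
    Set.InjOn.ncard_image]
  · intro s _ t _ hst
    obtain ⟨a, ha⟩ := (Projectivization.mk_eq_mk_iff' K _ _ _ _).mp hst
    have := hz.eq_of_pair (s := a) (t := a * t) (s' := 1) (t' := s)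
      (by rw [one_smul, ← ha, smul_add, smul_smul])
    rw [this.1, one_mul] at this
    exact this.2.symm
  · rintro ⟨t, -, ht⟩
    obtain ⟨a, ha⟩ := (Projectivization.mk_eq_mk_iff' K _ _ _ _).mp ht
    exact zero_ne_one (hz.eq_of_pair (s := 0) (t := a) (s' := 1) (t' := t)
      (by rw [zero_smul, zero_add, ha, one_smul])).1

lemma span_pair_eq_of_finrank_eq_two {W : Submodule K V} (hW : finrank K W = 2) {x y : V}
    (hxy : LinearIndependent K ![x, y]) (hx : x ∈ W) (hy : y ∈ W) : span K {x, y} = W := by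
  have : FiniteDimensional K W := Module.finite_of_finrank_pos (by omega)
  refine eq_of_le_of_finrank_le (span_le.mpr ?_) ?_
  · rintro _ (rfl | rfl)
    exacts [hx, hy]
  · rw [hW, ← Matrix.range_cons_cons_empty, finrank_span_eq_card hxy, Fintype.card_fin]

end ProjectiveLine

section Subgeometry

variable {F K : Type*} [Field F] [Field K] [Algebra F K]

lemma mem_sigmaSet_iff {P : ℙ K (Fin 5 → K)} : P ∈ sigmaSet F K ↔ coordRank F P.rep ≤ 1 :=
  coordRank_le_one_iff.symm

lemma mk_mem_sigmaSet {w : Fin 5 → F} (hw : algebraMap F K ∘ w ≠ 0) :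
    Projectivization.mk K _ hw ∈ sigmaSet F K := by
  obtain ⟨a, ha⟩ := Projectivization.exists_smul_eq_mk_rep K _ hw
  exact ⟨w, a, ha.symm⟩

lemma mem_omega2Set_iff {P : ℙ K (Fin 5 → K)} : P ∈ omega2Set F K ↔ coordRank F P.rep = 2 := by
  constructor
  · rintro ⟨hP, Q₁, Q₂, ⟨w₁, c₁, h₁⟩, ⟨w₂, c₂, h₂⟩, -, hspan⟩
    obtain ⟨a, b, hab⟩ := mem_span_pair.mp hspan
    have hcomb : P.rep = liftComb K ![w₁, w₂] ![a * c₁, b * c₂] := by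
      rw [liftComb_fin_two, ← hab, h₁, h₂, smul_smul, smul_smul]
      rfl
    have := coordRank_le_card_of_eq_liftComb hcomb
    rw [mem_sigmaSet_iff] at hP
    simp only [Fintype.card_fin] at this
    omega
  · intro h
    obtain ⟨c, e, hP⟩ := exists_eq_liftComb_of_coordRank_eq h
    have he : LinearIndependent F e :=
      linearIndependent_of_coordRank_liftComb_eq_card (by rw [← hP, h, Fintype.card_fin])
    have hφ (j) : algebraMap F K ∘ e j ≠ 0 := fun h0 =>
      he.ne_zero j (funext fun i => (algebraMap F K).injective (by simpa using congrFun h0 i))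
    rw [liftComb_fin_two] at hP
    obtain ⟨u₀, hu₀⟩ := Projectivization.exists_smul_eq_mk_rep K _ (hφ 0)
    obtain ⟨u₁, hu₁⟩ := Projectivization.exists_smul_eq_mk_rep K _ (hφ 1)
    refine ⟨fun hsig => by rw [mem_sigmaSet_iff] at hsig; omega, _, _, mk_mem_sigmaSet (hφ 0),
      mk_mem_sigmaSet (hφ 1), fun heq => ?_, ?_⟩
    · obtain ⟨a, ha⟩ := (Projectivization.mk_eq_mk_iff' K _ _ _ _).mp heq
      have : coordRank F P.rep ≤ 1 := coordRank_le_one_iff.mpr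
        ⟨e 1, c 0 * a + c 1, by rw [hP, ← ha, smul_smul, ← add_smul]; rfl⟩
      omega
    · refine mem_span_pair.mpr ⟨c 0 * (u₀⁻¹ : Kˣ), c 1 * (u₁⁻¹ : Kˣ), ?_⟩
      rw [← hu₀, ← hu₁, hP, Units.smul_def, Units.smul_def, smul_smul, smul_smul, mul_assoc,
        mul_assoc, Units.inv_mul, Units.inv_mul, mul_one, mul_one]

lemma two_le_coordRank_of_mem {W : Submodule K (Fin 5 → K)}
    (hdisj : ∀ P : ℙ K (Fin 5 → K), P.rep ∈ W → P ∉ sigmaSet F K) {v : Fin 5 → K} (hv : v ∈ W)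
    (hv₀ : v ≠ 0) : 2 ≤ coordRank F v := by
  obtain ⟨a, ha, hrep⟩ := exists_rep_eq_smul (K := K) hv₀
  have := hdisj _ (hrep ▸ smul_mem W a hv)
  rw [mem_sigmaSet_iff, hrep, coordRank_smul ha] at this
  omega

end Subgeometry

section Stabilizer

variable {F K : Type*} [Field F] [Field K] [Algebra F K]

variable (F) in
def mulStabilizer (B : Submodule F K) : Subalgebra F K where
  carrier := {x | ∀ b ∈ B, x * b ∈ B}
  mul_mem' hx hy b hb := by rw [mul_assoc]; exact hx _ (hy b hb)
  add_mem' hx hy b hb := by rw [add_mul]; exact add_mem (hx b hb) (hy b hb)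
  algebraMap_mem' r b hb := by rw [← Algebra.smul_def]; exact smul_mem B r hb

lemma finrank_mulStabilizer_le [FiniteDimensional F K] {B : Submodule F K} (hB : B ≠ ⊥) :
    finrank F (mulStabilizer F B) ≤ finrank F B := by
  obtain ⟨b₀, hb₀, hb₀0⟩ := B.ne_bot_iff.mp hB
  let f : mulStabilizer F B →ₗ[F] B :=
    LinearMap.codRestrict B (LinearMap.mulRight F b₀ ∘ₗ (mulStabilizer F B).val.toLinearMap)
      fun x => x.2 b₀ hb₀
  exact LinearMap.finrank_le_finrank_of_injective (f := f) fun x y hxy =>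
    Subtype.ext (mul_right_cancel₀ hb₀0 (congrArg Subtype.val hxy))

lemma mem_range_algebraMap_of_map_mulLeft_le (hK : Odd (finrank F K)) {B : Submodule F K}
    (hB : finrank F B = 2) {s : K} (hs : B.map (LinearMap.mulLeft F s) ≤ B) :
    s ∈ (algebraMap F K).range := by
  have : FiniteDimensional F K := Module.finite_of_finrank_pos hK.pos
  have hsS : s ∈ mulStabilizer F B := fun b hb => hs (mem_map_of_mem hb)
  have hdeg_le : (minpoly F s).natDegree ≤ 2 := by
    have hmin := minpoly.algebraMap_eq (A := F) Subtype.val_injective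
      (⟨s, hsS⟩ : mulStabilizer F B)
    refine hmin ▸ (minpoly.natDegree_le _).trans ?_
    exact hB ▸ finrank_mulStabilizer_le (by rintro rfl; simp at hB)
  have hint : IsIntegral F s := IsIntegral.of_finite F s
  have hodd : Odd (minpoly F s).natDegree := Odd.of_dvd_nat hK (minpoly.degree_dvd hint)
  have hpos := minpoly.natDegree_pos hint
  apply minpoly.natDegree_eq_one_iff.mp
  obtain ⟨k, hk⟩ := hodd
  omega

lemma finrank_map_mulLeft {t : K} (ht : t ≠ 0) (B : Submodule F K) :
    finrank F (B.map (LinearMap.mulLeft F t)) = finrank F B :=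
  (equivMapOfInjective _ (mul_right_injective₀ ht) B).finrank_eq.symm

lemma ncard_setOf_map_mulLeft_le [Finite F] (hK : Odd (finrank F K)) {A B : Submodule F K}
    (hA : finrank F A = 2) (hB : finrank F B = 2) :
    {t : K | B.map (LinearMap.mulLeft F t) ≤ A}.ncard = 1 ∨
      {t : K | B.map (LinearMap.mulLeft F t) ≤ A}.ncard = Nat.card F := by
  have : FiniteDimensional F A := Module.finite_of_finrank_pos (by omega)
  by_cases h : ∃ t₀ ≠ 0, B.map (LinearMap.mulLeft F t₀) ≤ A
  · right
    obtain ⟨t₀, ht₀, hle⟩ := h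
    have hA_eq : B.map (LinearMap.mulLeft F t₀) = A :=
      eq_of_le_of_finrank_eq hle (by rw [finrank_map_mulLeft ht₀, hA, hB])
    have hset : {t : K | B.map (LinearMap.mulLeft F t) ≤ A} =
        Set.range fun x : F => algebraMap F K x * t₀ := by
      ext t
      constructor
      · intro ht
        refine (mem_range_algebraMap_of_map_mulLeft_le hK hB (s := t * t₀⁻¹) ?_).imp
          fun x hx => by simp only [hx, inv_mul_cancel_right₀ ht₀]
        rintro _ ⟨b, hb, rfl⟩
        obtain ⟨b', hb', hb'eq⟩ := hA_eq ▸ ht (mem_map_of_mem hb)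
        simp only [LinearMap.mulLeft_apply] at hb'eq ⊢
        rwa [mul_right_comm, ← hb'eq, mul_comm t₀, mul_inv_cancel_right₀ ht₀]
      · rintro ⟨x, rfl⟩ _ ⟨b, hb, rfl⟩
        rw [LinearMap.mulLeft_apply, mul_assoc, ← Algebra.smul_def]
        exact smul_mem A x (hle (mem_map_of_mem hb))
    rw [hset, ← Set.image_univ, Set.ncard_image_of_injective _
      fun x y hxy => (algebraMap F K).injective (mul_right_cancel₀ ht₀ hxy), Set.ncard_univ]
  · left
    refine Set.ncard_eq_one.mpr ⟨0, Set.eq_singleton_iff_unique_mem.mpr ⟨?_, fun t ht => ?_⟩⟩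
    · rintro _ ⟨b, -, rfl⟩
      simp
    · by_contra ht₀
      exact h ⟨t, ht₀, ht⟩

end Stabilizer

section Pencil

variable {F K V : Type*} [Field F] [Field K] [Algebra F K] [AddCommGroup V] [Module F V]

lemma card_filter_mem_and_ne_zero [Fintype V] [DecidableEq V] (S : Submodule F V)
    [DecidablePred (· ∈ S)] :
    (Finset.univ.filter fun σ => σ ∈ S ∧ σ ≠ 0).card = Nat.card S - 1 := by
  have : (Finset.univ.filter fun σ => σ ∈ S ∧ σ ≠ 0) = (Finset.univ.filter (· ∈ S)).erase 0 := by
    ext σ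
    simp [and_comm]
  rw [this, Finset.card_erase_of_mem (by simp), Nat.card_eq_fintype_card, Fintype.card_subtype]

lemma neg_div_eq_iff_mem_ker_add_smul {p m : V →ₗ[F] K} {σ : V} (hσ : m σ ≠ 0) (t : K) :
    -p σ / m σ = t ↔ σ ∈ LinearMap.ker (p + t • m) := by
  change _ ↔ p σ + t * m σ = 0
  rw [div_eq_iff hσ]
  constructor <;> intro h <;> linear_combination -h

lemma apply_ne_zero_of_mem_ker_add_smul {p m : V →ₗ[F] K}
    (hpm : LinearMap.ker p ⊓ LinearMap.ker m = ⊥) {σ : V} {t : K}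
    (hσ : σ ∈ LinearMap.ker (p + t • m)) (hσ₀ : σ ≠ 0) : m σ ≠ 0 := by
  intro hm
  have hp : p σ = 0 := by simpa [hm] using hσ
  have : σ ∈ LinearMap.ker p ⊓ LinearMap.ker m := ⟨hp, hm⟩
  rw [hpm] at this
  exact hσ₀ this

lemma card_sub_card_ker_eq [Finite V] {p m : V →ₗ[F] K}
    (hpm : LinearMap.ker p ⊓ LinearMap.ker m = ⊥)
    (hker : ∀ t : K, finrank F (LinearMap.ker (p + t • m)) ≤ 1) :
    Nat.card V - Nat.card (LinearMap.ker m) =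
      (Nat.card F - 1) * {t : K | LinearMap.ker (p + t • m) ≠ ⊥}.ncard := by
  classical
  have := Fintype.ofFinite V
  -- count `D` by the fibres of `σ ↦ -p σ / m σ`, the fibre over `t` being `ker (p + t • m) \ 0`
  let D := Finset.univ.filter fun σ => m σ ≠ 0
  have hfiber (t : K) : (D.filter fun σ => -p σ / m σ = t) =
      Finset.univ.filter fun σ => σ ∈ LinearMap.ker (p + t • m) ∧ σ ≠ 0 := by
    ext σ
    simp only [D, Finset.mem_filter, Finset.mem_univ, true_and]
    constructor
    · rintro ⟨hσ, h⟩
      exact ⟨(neg_div_eq_iff_mem_ker_add_smul hσ t).mp h, fun h0 => hσ (by simp [h0])⟩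
    · rintro ⟨hσ, hσ₀⟩
      have hmσ := apply_ne_zero_of_mem_ker_add_smul hpm hσ hσ₀
      exact ⟨hmσ, (neg_div_eq_iff_mem_ker_add_smul hmσ t).mpr hσ⟩
  have hT : {t : K | LinearMap.ker (p + t • m) ≠ ⊥} = ↑(D.image fun σ => -p σ / m σ) := by
    ext t
    rw [Finset.coe_image, Set.mem_image, Set.mem_ofPred_eq, Submodule.ne_bot_iff]
    simp only [Finset.mem_coe, ← Finset.mem_filter (p := fun σ => -p σ / m σ = t), hfiber t]
    simp
  have hcard : D.card = Nat.card V - Nat.card (LinearMap.ker m) := by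
    rw [Nat.card_eq_fintype_card, Nat.card_eq_fintype_card, Fintype.card_subtype,
      ← Finset.card_univ, ← Finset.card_filter_add_card_filter_not (s := Finset.univ)
        (fun σ => σ ∈ LinearMap.ker m)]
    simp [D]
  rw [← hcard, Finset.card_eq_sum_card_image (fun σ => -p σ / m σ) D, hT, Set.ncard_coe_finset,
    mul_comm, ← smul_eq_mul, ← Finset.sum_const]
  refine Finset.sum_congr rfl fun t ht => ?_
  have hne : LinearMap.ker (p + t • m) ≠ ⊥ := by
    rw [← Finset.mem_coe, ← hT] at ht
    exact ht
  have hrank : finrank F (LinearMap.ker (p + t • m)) = 1 :=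
    le_antisymm (hker t) (Nat.one_le_iff_ne_zero.mpr fun h => hne (finrank_eq_zero.mp h))
  rw [hfiber, card_filter_mem_and_ne_zero, Module.natCard_eq_pow_finrank (K := F), hrank,
    pow_one]

lemma finrank_eq_three_and_ker_inf_ker_eq_bot [FiniteDimensional F V] (hV : finrank F V ≤ 3)
    {p m : V →ₗ[F] K} (hm : finrank F (LinearMap.range m) = 2)
    (h : ∀ a b : K, a ≠ 0 ∨ b ≠ 0 → 2 ≤ finrank F (LinearMap.range (a • p + b • m))) :
    finrank F V = 3 ∧ LinearMap.ker p ⊓ LinearMap.ker m = ⊥ := by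
  obtain ⟨x, hx⟩ : ∃ x, m x ≠ 0 := by
    by_contra! h0
    rw [LinearMap.range_eq_bot.mpr (LinearMap.ext h0), finrank_bot] at hm
    exact absurd hm (by norm_num)
  -- the member of the pencil through `x` has a kernel strictly larger than `ker p ⊓ ker m`
  set g := m x • p + (-p x) • m
  have hlt : LinearMap.ker p ⊓ LinearMap.ker m < LinearMap.ker g := by
    refine lt_of_le_of_ne (fun σ hσ => ?_) fun heq => hx ?_
    · simp [g, LinearMap.mem_ker.mp hσ.1, LinearMap.mem_ker.mp hσ.2]
    · have : x ∈ LinearMap.ker g := by simp [g, mul_comm]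
      exact (heq ▸ this).2
  have hlt' := Submodule.finrank_lt_finrank_of_lt hlt
  have hg : 2 ≤ finrank F (LinearMap.range g) := h _ _ (Or.inl hx)
  have hrn := LinearMap.finrank_range_add_finrank_ker g
  exact ⟨by omega, finrank_eq_zero.mp (by omega)⟩

lemma ncard_setOf_finrank_range_add_smul_le_two [Finite F] [Finite V] (hV : finrank F V ≤ 3)
    {p m : V →ₗ[F] K} (hm : finrank F (LinearMap.range m) = 2)
    (h : ∀ a b : K, a ≠ 0 ∨ b ≠ 0 → 2 ≤ finrank F (LinearMap.range (a • p + b • m))) :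
    {t : K | finrank F (LinearMap.range (p + t • m)) ≤ 2}.ncard =
      Nat.card F ^ 2 + Nat.card F := by
  have : FiniteDimensional F V := Module.Finite.of_finite
  have hrn (g : V →ₗ[F] K) := LinearMap.finrank_range_add_finrank_ker g
  obtain ⟨hV3, hpm⟩ := finrank_eq_three_and_ker_inf_ker_eq_bot hV hm h
  have hker (t : K) : finrank F (LinearMap.ker (p + t • m)) ≤ 1 := by
    have := h 1 t (Or.inl one_ne_zero)
    rw [one_smul] at this
    have := hrn (p + t • m)
    omega
  have hT : {t : K | finrank F (LinearMap.range (p + t • m)) ≤ 2} =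
      {t : K | LinearMap.ker (p + t • m) ≠ ⊥} := by
    ext t
    simp only [Set.mem_ofPred_eq, ne_eq, ← finrank_eq_zero]
    have := hrn (p + t • m)
    omega
  have hq : 1 < Nat.card F := Finite.one_lt_card
  have key := card_sub_card_ker_eq hpm hker
  rw [Module.natCard_eq_pow_finrank (K := F),
    Module.natCard_eq_pow_finrank (K := F) (V := LinearMap.ker m), hV3,
    (by have := hrn m; omega : finrank F (LinearMap.ker m) = 1), pow_one] at key
  rw [hT]
  refine Nat.eq_of_mul_eq_mul_left (Nat.sub_pos_of_lt hq) (key.symm.trans ?_)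
  obtain ⟨k, hk⟩ : ∃ k, Nat.card F = k + 1 := ⟨Nat.card F - 1, by omega⟩
  rw [hk]
  simp only [add_tsub_cancel_right]
  ring_nf
  omega

end Pencil

section RankTwoPencil

variable {F K : Type*} [Field F] [Field K] [Algebra F K] {ι : Type*} [Fintype ι]

lemma finrank_span_range_eq_two {e : Fin 2 → ι → F} {c : Fin 2 → K}
    (h : coordRank F (liftComb K e c) = 2) : finrank F (span F (Set.range c)) = 2 :=
  le_antisymm ((finrank_range_le_card c).trans_eq (Fintype.card_fin 2))
    (h.symm.le.trans (coordRank_liftComb_le_left e c))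

lemma ncard_setOf_coordRank_liftComb_add_smul_le_two_of_linearIndependent [Finite F]
    (hK : Odd (finrank F K)) {e₁ e₂ : Fin 2 → ι → F} {c₁ c₂ : Fin 2 → K}
    (he : LinearIndependent F (Sum.elim e₁ e₂))
    (h₁ : coordRank F (liftComb K e₁ c₁) = 2) (h₂ : coordRank F (liftComb K e₂ c₂) = 2) :
    {t : K | coordRank F (liftComb K e₁ c₁ + t • liftComb K e₂ c₂) ≤ 2}.ncard = 1 ∨
      {t : K | coordRank F (liftComb K e₁ c₁ + t • liftComb K e₂ c₂) ≤ 2}.ncard =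
        Nat.card F := by
  have hA := finrank_span_range_eq_two h₁
  have hset : {t : K | coordRank F (liftComb K e₁ c₁ + t • liftComb K e₂ c₂) ≤ 2} =
      {t : K | (span F (Set.range c₂)).map (LinearMap.mulLeft F t) ≤ span F (Set.range c₁)} := by
    ext t
    have := coordRank_liftComb_add_smul_le_iff he c₁ c₂ t
    rwa [hA] at this
  rw [hset]
  exact ncard_setOf_map_mulLeft_le hK hA (finrank_span_range_eq_two h₂)

lemma ncard_setOf_coordRank_liftComb_add_smul_le_two_of_not_linearIndependent [Finite F]
    {e₁ e₂ : Fin 2 → ι → F} {c₁ c₂ : Fin 2 → K}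
    (he : ¬ LinearIndependent F (Sum.elim e₁ e₂)) (h₂ : coordRank F (liftComb K e₂ c₂) = 2)
    (h : ∀ a b : K, a ≠ 0 ∨ b ≠ 0 →
      2 ≤ coordRank F (a • liftComb K e₁ c₁ + b • liftComb K e₂ c₂)) :
    {t : K | coordRank F (liftComb K e₁ c₁ + t • liftComb K e₂ c₂) ≤ 2}.ncard =
      Nat.card F ^ 2 + Nat.card F := by
  obtain ⟨s, hs, hspan, hsind⟩ := exists_linearIndependent F (Set.range (Sum.elim e₁ e₂))
  have : Fintype s := ((Set.finite_range _).subset hs).fintype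
  have hmem : Set.range (Sum.elim e₁ e₂) ⊆ span F (Set.range ((↑) : s → ι → F)) := by
    rw [Subtype.range_coe, hspan]
    exact subset_span
  obtain ⟨c₁', hc₁'⟩ :=
    exists_liftComb_eq_liftComb_of_mem_span (e := e₁) (fun j => hmem ⟨Sum.inl j, rfl⟩) c₁
  obtain ⟨c₂', hc₂'⟩ :=
    exists_liftComb_eq_liftComb_of_mem_span (e := e₂) (fun j => hmem ⟨Sum.inr j, rfl⟩) c₂
  have hrank (a b : K) : coordRank F (a • liftComb K e₁ c₁ + b • liftComb K e₂ c₂) =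
      finrank F (LinearMap.range (a • Fintype.linearCombination F c₁' +
        b • Fintype.linearCombination F c₂')) := by
    rw [hc₁', hc₂', ← map_smul, ← map_smul, ← map_add, coordRank_liftComb hsind,
      ← Fintype.range_linearCombination, linearCombination_smul_add_smul]
  have hcard : finrank F (s → F) ≤ 3 := by
    rw [finrank_fintype_fun_eq_card, ← finrank_span_eq_card hsind, Subtype.range_coe, hspan]
    have : finrank F (span F (Set.range (Sum.elim e₁ e₂))) ≤ 4 :=
      (finrank_range_le_card _).trans_eq (by simp)
    have : finrank F (span F (Set.range (Sum.elim e₁ e₂))) ≠ 4 := fun h4 =>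
      he (linearIndependent_iff_card_eq_finrank_span.mpr (h4.trans (by simp)).symm)
    omega
  have hm : finrank F (LinearMap.range (Fintype.linearCombination F c₂')) = 2 := by
    have := hrank 0 1
    rwa [zero_smul, zero_add, one_smul, zero_smul, zero_add, one_smul, h₂, eq_comm] at this
  have hset : {t : K | coordRank F (liftComb K e₁ c₁ + t • liftComb K e₂ c₂) ≤ 2} =
      {t : K | finrank F (LinearMap.range (Fintype.linearCombination F c₁' +
        t • Fintype.linearCombination F c₂')) ≤ 2} := by
    ext t
    simp only [Set.mem_ofPred_eq]
    rw [← one_smul K (liftComb K e₁ c₁), hrank, one_smul]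
  rw [hset]
  exact ncard_setOf_finrank_range_add_smul_le_two hcard hm fun a b hab => hrank a b ▸ h a b hab

theorem ncard_setOf_coordRank_add_smul_eq_two [Finite F] (hK : Odd (finrank F K))
    {z₁ z₂ : ι → K} (h₁ : coordRank F z₁ = 2) (h₂ : coordRank F z₂ = 2)
    (h : ∀ a b : K, a ≠ 0 ∨ b ≠ 0 → 2 ≤ coordRank F (a • z₁ + b • z₂)) :
    {t : K | coordRank F (z₁ + t • z₂) = 2}.ncard ∈
      ({1, Nat.card F, Nat.card F ^ 2 + Nat.card F} : Set ℕ) := by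
  have hset : {t : K | coordRank F (z₁ + t • z₂) = 2} = {t | coordRank F (z₁ + t • z₂) ≤ 2} := by
    ext t
    have := h 1 t (Or.inl one_ne_zero)
    rw [one_smul] at this
    simp only [Set.mem_ofPred_eq]
    omega
  rw [hset]
  obtain ⟨c₁, e₁, rfl⟩ := exists_eq_liftComb_of_coordRank_eq h₁
  obtain ⟨c₂, e₂, rfl⟩ := exists_eq_liftComb_of_coordRank_eq h₂
  by_cases he : LinearIndependent F (Sum.elim e₁ e₂)
  · rcases ncard_setOf_coordRank_liftComb_add_smul_le_two_of_linearIndependent hK he h₁ h₂ with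
      h' | h' <;> simp [h']
  · simp [ncard_setOf_coordRank_liftComb_add_smul_le_two_of_not_linearIndependent he h₂ h]

end RankTwoPencil

theorem stmt_7_general {q : ℕ} (F K : Type*) [Field F] [Fintype F]
    [Field K] [Algebra F K] (hF : Fintype.card F = q) (hK : Module.finrank F K = 5)
    (W : Submodule K (Fin 5 → K)) (hW : Module.finrank K W = 2)
    (hdisj : ∀ P : Projectivization K (Fin 5 → K), P.rep ∈ W → P ∉ sigmaSet F K) :
    ({P : Projectivization K (Fin 5 → K) | P.rep ∈ W ∧ P ∈ omega2Set F K}).ncard ∈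
      ({0, 1, 2, q + 1, q ^ 2 + q + 1} : Set ℕ) := by
  have : FiniteDimensional F K := Module.finite_of_finrank_pos (by omega)
  have : Finite K := Module.finite_of_finite F
  simp only [mem_omega2Set_iff]
  rcases Set.subsingleton_or_nontrivial {P : ℙ K _ | P.rep ∈ W ∧ coordRank F P.rep = 2} with
    hS | ⟨P₁, ⟨hP₁W, hP₁⟩, P₂, ⟨hP₂W, hP₂⟩, hne⟩
  · rcases hS.eq_empty_or_singleton with h | ⟨P, h⟩ <;> simp [h]
  have hind : LinearIndependent K ![P₁.rep, P₂.rep] :=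
    Projectivization.linearIndependent_pair_iff_ne.mpr hne
  have hpencil (a b : K) (hab : a ≠ 0 ∨ b ≠ 0) : 2 ≤ coordRank F (a • P₁.rep + b • P₂.rep) :=
    two_le_coordRank_of_mem hdisj (add_mem (smul_mem W a hP₁W) (smul_mem W b hP₂W)) fun h0 => by
      have := hind.eq_zero_of_pair h0
      tauto
  rw [← span_pair_eq_of_finrank_eq_two hW hind hP₁W hP₂W,
    ncard_setOf_rep_mem_span_pair hind (p := fun v => coordRank F v = 2)
      (fun c v hc => by rw [coordRank_smul hc]) hP₂]
  have := ncard_setOf_coordRank_add_smul_eq_two (hK ▸ by decide) hP₁ hP₂ hpencil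
  rw [Nat.card_eq_fintype_card, hF] at this
  simp only [Set.mem_insert_iff, Set.mem_singleton_iff] at this ⊢
  omega

/-- A line of `PG(4,q⁵)` disjoint from the canonical subgeometry
`Σ ≅ PG(4,q)` meets `Ω₂` in exactly `0, 1, 2, q+1` or `q²+q+1` points. -/
theorem stmt_7 {q : ℕ} (hq : IsPrimePow q) (F K : Type*) [Field F] [Fintype F]
    [Field K] [Algebra F K] (hF : Fintype.card F = q) (hK : Module.finrank F K = 5)
    (W : Submodule K (Fin 5 → K)) (hW : Module.finrank K W = 2)
    (hdisj : ∀ P : Projectivization K (Fin 5 → K), P.rep ∈ W → P ∉ sigmaSet F K) :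
    ({P : Projectivization K (Fin 5 → K) | P.rep ∈ W ∧ P ∈ omega2Set F K}).ncard ∈
      ({0, 1, 2, q + 1, q ^ 2 + q + 1} : Set ℕ) :=
  stmt_7_general F K hF hK W hW hdisj
end

section
/- Let q be a prime power and γ0, γ1', γ2' ∈ F_{q^5} with γ0 ∉ F_q. Suppose dim_{F_q}⟨1, γ0, γ1', γ0γ1'⟩ = 3 and ⟨1, γ0, γ2', γ0γ2'⟩ = ⟨1, γ0, γ1', γ0γ1'⟩ as F_q-subspaces. Then 1, γ1', γ2' are linearly dependent over F_q. -/
/-!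
Let `V = ⟨1, γ0, γ1', γ0γ1'⟩`. The three vectors `1, γ1', γ2'` lie in `V` and are mapped into `V`
by multiplication with `γ0`; if they were independent, the subspace `V ∩ γ0⁻¹V` would have
dimension `3 = dim V`, so `V` would be stable under `γ0`. A `γ0`-stable subspace containing `1`
contains `F[γ0]`, which is all of `K` because `[K : F] = 5` is prime and `γ0 ∉ F`; this
contradicts `dim V = 3`.
-/

open Module

theorem Submodule.map_le_of_finrank_le_finrank_inf_comap {R M : Type*} [DivisionRing R]
    [AddCommGroup M] [Module R M] {W : Submodule R M} [FiniteDimensional R W] (f : M →ₗ[R] M)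
    (h : finrank R W ≤ finrank R ↥(W ⊓ W.comap f)) : W.map f ≤ W := by
  rw [Submodule.map_le_iff_le_comap]
  have hW : W ⊓ W.comap f = W := Submodule.eq_of_le_of_finrank_le inf_le_left h
  exact hW.ge.trans inf_le_right

theorem Algebra.adjoin_singleton_le_of_one_mem_of_mul_mem {R A : Type*} [CommSemiring R]
    [Semiring A] [Algebra R A] {V : Submodule R A} {γ : A} (h1 : (1 : A) ∈ V)
    (hmul : ∀ x ∈ V, γ * x ∈ V) : Subalgebra.toSubmodule (Algebra.adjoin R {γ}) ≤ V := by
  rw [Algebra.adjoin_eq_span, Submodule.span_le, ← Submonoid.powers_eq_closure]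
  rintro _ ⟨n, rfl⟩
  induction n with
  | zero => simpa using h1
  | succ n ih => simpa [pow_succ'] using hmul _ ih

theorem Algebra.adjoin_singleton_eq_top_of_finrank_prime {F A : Type*} [Field F] [Ring A]
    [IsDomain A] [Algebra F A] (hp : (finrank F A).Prime) {γ : A}
    (hγ : γ ∉ Set.range (algebraMap F A)) : Algebra.adjoin F {γ} = ⊤ := by
  have := Subalgebra.isSimpleOrder_of_finrank_prime F A hp
  refine (eq_bot_or_eq_top (Algebra.adjoin F {γ})).resolve_left fun hbot => hγ ?_
  rw [← Algebra.mem_bot, ← hbot]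
  exact Algebra.self_mem_adjoin_singleton F γ

theorem stmt_17_general (F K : Type*) [Field F]
    [Field K] [Algebra F K] (hK : Module.finrank F K = 5)
    (γ0 γ1' γ2' : K) (hγ0 : γ0 ∉ Set.range (algebraMap F K))
    (hdim : Module.finrank F
      (Submodule.span F ({1, γ0, γ1', γ0 * γ1'} : Set K)) = 3)
    (heq : Submodule.span F ({1, γ0, γ2', γ0 * γ2'} : Set K) =
      Submodule.span F ({1, γ0, γ1', γ0 * γ1'} : Set K)) :
    ¬ LinearIndependent F ![(1 : K), γ1', γ2'] := by
  intro hli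
  have : FiniteDimensional F K := Module.finite_of_finrank_pos (by omega)
  set V := Submodule.span F ({1, γ0, γ1', γ0 * γ1'} : Set K)
  set U := V ⊓ V.comap (LinearMap.mulLeft F γ0)
  have hγ2 : γ2' ∈ V ∧ γ0 * γ2' ∈ V := by
    rw [← heq]; exact ⟨Submodule.subset_span (by simp), Submodule.subset_span (by simp)⟩
  have hU : Submodule.span F (Set.range ![(1 : K), γ1', γ2']) ≤ U := by
    rw [Submodule.span_le, Set.range_subset_iff]
    intro i
    fin_cases i
    · exact ⟨Submodule.subset_span (by simp), by simpa using Submodule.subset_span (by simp)⟩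
    · exact ⟨Submodule.subset_span (by simp), Submodule.subset_span (by simp)⟩
    · exact hγ2
  have hstable : V.map (LinearMap.mulLeft F γ0) ≤ V := by
    refine Submodule.map_le_of_finrank_le_finrank_inf_comap _ ?_
    calc finrank F V = 3 := hdim
      _ = finrank F (Submodule.span F (Set.range ![(1 : K), γ1', γ2'])) := by
        simp [finrank_span_eq_card hli]
      _ ≤ finrank F U := Submodule.finrank_mono hU
  have hV : V = ⊤ := by
    refine top_le_iff.mp ?_
    rw [← Algebra.toSubmodule_eq_top.mpr
      (Algebra.adjoin_singleton_eq_top_of_finrank_prime (hK ▸ Nat.prime_five) hγ0)]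
    exact Algebra.adjoin_singleton_le_of_one_mem_of_mul_mem (Submodule.subset_span (by simp))
      fun x hx => hstable ⟨x, hx, rfl⟩
  rw [hV, finrank_top, hK] at hdim
  exact absurd hdim (by norm_num)

/-- For `γ0 ∈ F_{q⁵} \ F_q`, if `dim_{F_q}⟨1, γ0, γ1', γ0γ1'⟩ = 3` and
`⟨1, γ0, γ2', γ0γ2'⟩ = ⟨1, γ0, γ1', γ0γ1'⟩`, then `1, γ1', γ2'` are `F_q`-linearly
dependent. -/
theorem stmt_17 {q : ℕ} (hq : IsPrimePow q) (F K : Type*) [Field F] [Fintype F]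
    [Field K] [Algebra F K] (hF : Fintype.card F = q) (hK : Module.finrank F K = 5)
    (γ0 γ1' γ2' : K) (hγ0 : γ0 ∉ Set.range (algebraMap F K))
    (hdim : Module.finrank F
      (Submodule.span F ({1, γ0, γ1', γ0 * γ1'} : Set K)) = 3)
    (heq : Submodule.span F ({1, γ0, γ2', γ0 * γ2'} : Set K) =
      Submodule.span F ({1, γ0, γ1', γ0 * γ1'} : Set K)) :
    ¬ LinearIndependent F ![(1 : K), γ1', γ2'] :=
  stmt_17_general F K hK γ0 γ1' γ2' hγ0 hdim heq
end

section
/- Let q be a prime power and γ, δ1, δ2 ∈ F_{q^5} with γ ∉ F_q and dim_{F_q}⟨1, γ, γδ1, γδ2⟩ = 4. If γδ1 = c0 + c1γ + c2γ^2 + c3γδ2 for some c0,c1,c2,c3 ∈ F_q (so c2 ≠ 0), then it is impossible that both γ^2δ1 and γ^2δ2 lie in the F_q-span of {1, γ, γ^2, γδ2}. -/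
/-!
Since `[K : F] = 5` is prime and `γ ∉ F`, the powers `1, γ, …, γ⁴` are independent: a polynomial
of degree `< 5` vanishing at `γ` is zero. Multiplying the relation for `γδ₁` by `γ` and using
`c₂ ≠ 0` puts `γ³` in `S = ⟨1, γ, γ², γδ₂⟩`. By the exchange lemma `γδ₂` then lies in
`⟨1, γ, γ², γ³⟩`, and so does `γ · γδ₂ = γ²δ₂ ∈ S`; comparing degrees, `γδ₂ ∈ ⟨1, γ, γ²⟩`.
But then `S = ⟨1, γ, γ²⟩` would contain `γ³`.
-/

open Polynomial Module Submodule

section PowerSpans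

variable {F K : Type*} [Field F] [Ring K] [Algebra F K] (γ : K)

lemma eq_zero_of_aeval_eq_zero_of_degree_lt_minpoly {p : F[X]} (hp : aeval γ p = 0)
    (hdeg : p.degree < (minpoly F γ).degree) : p = 0 := by
  by_contra h
  exact (minpoly.degree_le_of_ne_zero F γ h hp).not_gt hdeg

lemma pow_mem_map_degreeLT {i n : ℕ} (hi : i < n) :
    γ ^ i ∈ (degreeLT F n).map (aeval γ).toLinearMap :=
  ⟨X ^ i, mem_degreeLT.2 (by rw [degree_X_pow]; exact_mod_cast hi), by simp⟩

lemma pow_notMem_map_degreeLT {n : ℕ} (hn : n < (minpoly F γ).natDegree) :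
    γ ^ n ∉ (degreeLT F n).map (aeval γ).toLinearMap := by
  rintro ⟨f, hf, hfγ⟩
  rw [SetLike.mem_coe, mem_degreeLT] at hf
  have hdeg : (X ^ n - f).degree = (n : WithBot ℕ) := by
    rw [degree_sub_eq_left_of_degree_lt (by rwa [degree_X_pow]), degree_X_pow]
  have h0 := eq_zero_of_aeval_eq_zero_of_degree_lt_minpoly γ (p := X ^ n - f)
    (by simpa [sub_eq_zero] using hfγ.symm) (hdeg ▸ coe_lt_degree.2 hn)
  simp [h0] at hdeg

lemma mem_map_degreeLT_of_mul_mem {n : ℕ} (hn : n + 1 < (minpoly F γ).natDegree) {x : K}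
    (hx : x ∈ (degreeLT F (n + 1)).map (aeval γ).toLinearMap)
    (hγx : γ * x ∈ (degreeLT F (n + 1)).map (aeval γ).toLinearMap) :
    x ∈ (degreeLT F n).map (aeval γ).toLinearMap := by
  obtain ⟨f, hf, rfl⟩ := hx
  obtain ⟨g, hg, hgγ⟩ := hγx
  rw [SetLike.mem_coe, mem_degreeLT] at hf hg
  have hfX : X * f = g := by
    refine (sub_eq_zero.1 (eq_zero_of_aeval_eq_zero_of_degree_lt_minpoly γ ?_ ?_))
    · simpa [sub_eq_zero] using hgγ.symm
    · refine (degree_sub_le _ _).trans_lt (max_lt ?_ ?_) |>.trans_le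
        (Nat.WithBot.add_one_le_of_lt (coe_lt_degree.2 hn))
      · rw [X_mul, degree_mul_X]
        exact WithBot.add_lt_add_right (by simp) hf
      · exact hg.trans (by norm_cast; omega)
  refine ⟨f, mem_degreeLT.2 ?_, rfl⟩
  rw [← hfX, X_mul, degree_mul_X] at hg
  exact lt_of_add_lt_add_right hg

lemma span_one_self_sq_le_map_degreeLT :
    span F ({1, γ, γ ^ 2} : Set K) ≤ (degreeLT F 3).map (aeval γ).toLinearMap := by
  simp only [span_le, Set.insert_subset_iff, Set.singleton_subset_iff]
  refine ⟨?_, ?_, pow_mem_map_degreeLT γ (by norm_num)⟩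
  · simpa using pow_mem_map_degreeLT (F := F) γ (i := 0) (by norm_num)
  · simpa using pow_mem_map_degreeLT (F := F) γ (i := 1) (by norm_num)

lemma pow_three_notMem_span_of_mul_mem (hdeg : 4 < (minpoly F γ).natDegree) {x : K}
    (hγx : γ * x ∈ span F (insert x {1, γ, γ ^ 2})) :
    γ ^ 3 ∉ span F (insert x {1, γ, γ ^ 2}) := by
  intro hγ3
  have hT3 := span_one_self_sq_le_map_degreeLT (F := F) γ
  have hT4 := hT3.trans (map_mono (degreeLT_mono (show 3 ≤ 4 by norm_num)))
  have hxP : x ∈ span F (insert (γ ^ 3) {1, γ, γ ^ 2}) :=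
    mem_span_insert_exchange hγ3 fun h ↦ pow_notMem_map_degreeLT γ (by omega) (hT3 h)
  have hP4 : span F (insert (γ ^ 3) {1, γ, γ ^ 2}) ≤ (degreeLT F 4).map (aeval γ).toLinearMap :=
    span_le.2 (Set.insert_subset (pow_mem_map_degreeLT γ (by norm_num)) (subset_span.trans hT4))
  have hx3 : x ∈ (degreeLT F 3).map (aeval γ).toLinearMap :=
    mem_map_degreeLT_of_mul_mem γ (by omega) (hP4 hxP)
      (span_le.2 (Set.insert_subset (hP4 hxP) (subset_span.trans hT4)) hγx)
  exact pow_notMem_map_degreeLT γ (by omega)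
    (span_le.2 (Set.insert_subset hx3 (subset_span.trans hT3)) hγ3)

end PowerSpans

lemma natDegree_minpoly_eq_of_finrank_prime {F K : Type*} [Field F] [Field K] [Algebra F K]
    {p : ℕ} (hp : p.Prime) (hK : finrank F K = p) {γ : K}
    (hγ : γ ∉ Set.range (algebraMap F K)) : (minpoly F γ).natDegree = p := by
  have : FiniteDimensional F K := .of_finrank_pos (hK ▸ hp.pos)
  have hγint : IsIntegral F γ := .of_finite F γ
  refine (hp.eq_one_or_self_of_dvd _ (hK ▸ minpoly.degree_dvd hγint)).resolve_left fun h ↦ hγ ?_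
  exact minpoly.degree_eq_one_iff.1 (by rw [degree_eq_natDegree (minpoly.ne_zero hγint), h]; rfl)

lemma notMem_span_of_finrank_span_eq_four {F V : Type*} [Field F] [AddCommGroup V] [Module F V]
    {a b x y : V} (h : finrank F (span F ({a, b, x, y} : Set V)) = 4) :
    x ∉ span F ({a, b, y} : Set V) := by
  classical
  intro hx
  rw [Set.insert_comm b, Set.insert_comm a, span_insert_eq_span hx] at h
  have := finrank_span_le_card (R := F) ({a, b, y} : Set V)
  simp only [Set.toFinset_insert, Set.toFinset_singleton] at this
  have := Finset.card_le_three (a := a) (b := b) (c := y)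
  omega

theorem stmt_18_general (F K : Type*) [Field F] [Field K] [Algebra F K] (hK : Module.finrank F K = 5)
    (γ δ1 δ2 : K) (hγ : γ ∉ Set.range (algebraMap F K))
    (hdim : Module.finrank F
      (Submodule.span F ({1, γ, γ * δ1, γ * δ2} : Set K)) = 4)
    (c0 c1 c2 c3 : F)
    (hc : γ * δ1 = algebraMap F K c0 + algebraMap F K c1 * γ + algebraMap F K c2 * γ ^ 2 +
      algebraMap F K c3 * (γ * δ2)) :
    ¬ (γ ^ 2 * δ1 ∈ Submodule.span F ({1, γ, γ ^ 2, γ * δ2} : Set K) ∧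
       γ ^ 2 * δ2 ∈ Submodule.span F ({1, γ, γ ^ 2, γ * δ2} : Set K)) := by
  rintro ⟨h1, h2⟩
  have hc2 : c2 ≠ 0 := by
    rintro rfl
    refine notMem_span_of_finrank_span_eq_four hdim ?_
    rw [hc, map_zero, zero_mul, add_zero, ← Algebra.smul_def, ← Algebra.smul_def,
      Algebra.algebraMap_eq_smul_one]
    exact add_mem (add_mem (smul_mem _ _ (subset_span (by simp)))
      (smul_mem _ _ (subset_span (by simp)))) (smul_mem _ _ (subset_span (by simp)))
  have hγ3 : γ ^ 3 ∈ span F ({1, γ, γ ^ 2, γ * δ2} : Set K) := by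
    have : γ ^ 3 = c2⁻¹ • (γ ^ 2 * δ1 - c0 • γ - c1 • γ ^ 2 - c3 • (γ ^ 2 * δ2)) := by
      rw [eq_inv_smul_iff₀ hc2]
      simp only [Algebra.smul_def]
      linear_combination -γ * hc
    rw [this]
    exact smul_mem _ _ (sub_mem (sub_mem (sub_mem h1 (smul_mem _ _ (subset_span (by simp))))
      (smul_mem _ _ (subset_span (by simp)))) (smul_mem _ _ h2))
  have hS : ({1, γ, γ ^ 2, γ * δ2} : Set K) = insert (γ * δ2) {1, γ, γ ^ 2} := by
    ext; simp only [Set.mem_insert_iff, Set.mem_singleton_iff]; tauto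
  rw [hS] at h2 hγ3
  refine pow_three_notMem_span_of_mul_mem γ ?_ (by rwa [← mul_assoc, ← sq]) hγ3
  rw [natDegree_minpoly_eq_of_finrank_prime Nat.prime_five hK hγ]
  norm_num

/-- Let `γ ∉ F_q` with `dim_{F_q}⟨1, γ, γδ1, γδ2⟩ = 4` and
`γδ1 = c0 + c1γ + c2γ² + c3γδ2` for some `c0,…,c3 ∈ F_q`.  Then it is impossible that
both `γ²δ1` and `γ²δ2` lie in `⟨1, γ, γ², γδ2⟩`. -/
theorem stmt_18 {q : ℕ} (hq : IsPrimePow q) (F K : Type*) [Field F] [Fintype F]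
    [Field K] [Algebra F K] (hF : Fintype.card F = q) (hK : Module.finrank F K = 5)
    (γ δ1 δ2 : K) (hγ : γ ∉ Set.range (algebraMap F K))
    (hdim : Module.finrank F
      (Submodule.span F ({1, γ, γ * δ1, γ * δ2} : Set K)) = 4)
    (c0 c1 c2 c3 : F)
    (hc : γ * δ1 = algebraMap F K c0 + algebraMap F K c1 * γ + algebraMap F K c2 * γ ^ 2 +
      algebraMap F K c3 * (γ * δ2)) :
    ¬ (γ ^ 2 * δ1 ∈ Submodule.span F ({1, γ, γ ^ 2, γ * δ2} : Set K) ∧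
       γ ^ 2 * δ2 ∈ Submodule.span F ({1, γ, γ ^ 2, γ * δ2} : Set K)) :=
  stmt_18_general F K hK γ δ1 δ2 hγ hdim c0 c1 c2 c3 hc
end
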